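/- Let C be an [n,k]-linear code over F_q with k ≥ 2. Then d_p^{k-1}(C) = d_p^k(C) if and only if d_p^{k-1}(C) = d_p^k(C) = n. -/

import Mathlib

/-- The pair support of a subspace `D ≤ F^n` (indices mod `n`). -/
def pairSupport {F : Type*} [Field F] {n : ℕ} [NeZero n] (D : Submodule F (Fin n → F)) :
    Set (Fin n) :=
  {i | ∃ x ∈ D, x i ≠ 0 ∨ x (i + 1) ≠ 0}

/-- The `r`-minimal pair weight `d_p^r(C)` of a linear code `C ≤ F^n`. -/
noncomputable def dp {F : Type*} [Field F] {n : ℕ} [NeZero n]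
    (C : Submodule F (Fin n → F)) (r : ℕ) : ℕ :=
  sInf {m | ∃ D : Submodule F (Fin n → F), D ≤ C ∧ Module.finrank F D = r ∧
    (pairSupport D).ncard = m}

/-! Since `C` is its only subcode of dimension `k`, `d_p^k(C)` is the size of the pair support of
`C`. If that is less than `n`, some position `i` of the pair support is followed by a position
`i + 1` outside it, so every codeword vanishes at `i + 1`. The codewords vanishing at `i` then
form a subcode of dimension `k - 1` whose pair support misses `i`, whence
`d_p^{k-1}(C) < d_p^k(C)`. -/

open Fin.NatCast in
theorem Fin.exists_mem_add_one_notMem {n : ℕ} [NeZero n] {S : Set (Fin n)} (hne : S.Nonempty)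
    (hS : S ≠ Set.univ) : ∃ i ∈ S, i + 1 ∉ S := by
  by_contra! hclosed
  obtain ⟨i₀, hi₀⟩ := hne
  have hshift : ∀ m : ℕ, i₀ + (m : Fin n) ∈ S := by
    intro m
    induction m with
    | zero => simpa using hi₀
    | succ m ih => simpa [add_assoc] using hclosed _ ih
  refine hS (Set.eq_univ_of_forall fun j => ?_)
  simpa [Fin.cast_val_eq_self] using hshift (j - i₀).val

section PairSupport

variable {F : Type*} [Field F] {n : ℕ} [NeZero n]

theorem pairSupport_mono {D E : Submodule F (Fin n → F)} (h : D ≤ E) :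
    pairSupport D ⊆ pairSupport E :=
  fun _ ⟨x, hx, hxi⟩ => ⟨x, h hx, hxi⟩

theorem pairSupport_nonempty {C : Submodule F (Fin n → F)} (hC : C ≠ ⊥) :
    (pairSupport C).Nonempty := by
  obtain ⟨x, hxC, hx⟩ := (Submodule.ne_bot_iff C).mp hC
  obtain ⟨j, hj⟩ := Function.ne_iff.mp hx
  exact ⟨j, x, hxC, Or.inl hj⟩

theorem dp_le_ncard_pairSupport {C D : Submodule F (Fin n → F)} (h : D ≤ C) :
    dp C (Module.finrank F D) ≤ (pairSupport D).ncard :=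
  Nat.sInf_le ⟨D, h, rfl, rfl⟩

theorem dp_finrank (C : Submodule F (Fin n → F)) :
    dp C (Module.finrank F C) = (pairSupport C).ncard := by
  have hsubcodes : {m | ∃ D : Submodule F (Fin n → F), D ≤ C ∧
      Module.finrank F D = Module.finrank F C ∧ (pairSupport D).ncard = m} =
      {(pairSupport C).ncard} := by
    ext m
    constructor
    · rintro ⟨D, hDC, hDr, rfl⟩
      rw [Submodule.eq_of_le_of_finrank_eq hDC hDr]
      rfl
    · rintro rfl
      exact ⟨C, le_rfl, rfl, rfl⟩
  rw [dp, hsubcodes, csInf_singleton]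

theorem exists_pairSupport_subset_diff {C : Submodule F (Fin n → F)} {i : Fin n}
    (hi : i ∈ pairSupport C) (hi₁ : i + 1 ∉ pairSupport C) :
    ∃ D ≤ C, Module.finrank F D + 1 = Module.finrank F C ∧
      pairSupport D ⊆ pairSupport C \ {i} := by
  have hvanish : ∀ x ∈ C, x (i + 1) = 0 := fun x hx => by
    by_contra h
    exact hi₁ ⟨x, hx, Or.inl h⟩
  obtain ⟨x₀, hx₀C, hx₀⟩ := hi
  have hx₀i : x₀ i ≠ 0 := hx₀.resolve_right (not_not.mpr (hvanish x₀ hx₀C))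
  let φ : Module.Dual F C := (LinearMap.proj i).comp C.subtype
  have hφ : φ ≠ 0 := fun h => hx₀i (LinearMap.congr_fun h ⟨x₀, hx₀C⟩)
  refine ⟨(LinearMap.ker φ).map C.subtype, Submodule.map_subtype_le _ _, ?_, ?_⟩
  · rw [Submodule.finrank_map_subtype_eq]
    exact Module.Dual.finrank_ker_add_one_of_ne_zero hφ
  · rintro j ⟨_, ⟨y, hy, rfl⟩, hyj⟩
    refine ⟨⟨y, y.2, hyj⟩, fun hji => ?_⟩
    rw [Set.mem_singleton_iff] at hji
    subst hji
    exact hyj.elim (· hy) (· (hvanish y y.2))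

theorem dp_pred_lt_dp {C : Submodule F (Fin n → F)} (hC : C ≠ ⊥)
    (hS : pairSupport C ≠ Set.univ) :
    dp C (Module.finrank F C - 1) < dp C (Module.finrank F C) := by
  obtain ⟨i, hi, hi₁⟩ := Fin.exists_mem_add_one_notMem (pairSupport_nonempty hC) hS
  obtain ⟨D, hDC, hDr, hDS⟩ := exists_pairSupport_subset_diff hi hi₁
  have hfin : (pairSupport C).Finite := Set.toFinite _
  calc dp C (Module.finrank F C - 1)
      = dp C (Module.finrank F D) := by rw [← hDr, Nat.add_sub_cancel]
    _ ≤ (pairSupport D).ncard := dp_le_ncard_pairSupport hDC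
    _ ≤ (pairSupport C \ {i}).ncard := Set.ncard_le_ncard hDS hfin.sdiff
    _ < (pairSupport C).ncard := Set.ncard_sdiff_singleton_lt_of_mem hi hfin
    _ = dp C (Module.finrank F C) := (dp_finrank C).symm

end PairSupport

theorem dp_pred_eq_dp_iff_general {F : Type*} [Field F] {n k : ℕ} [NeZero n]
    (C : Submodule F (Fin n → F)) (hC : Module.finrank F C = k) (hk : 2 ≤ k) :
    dp C (k - 1) = dp C k ↔ (dp C (k - 1) = n ∧ dp C k = n) := by
  subst hC
  refine ⟨fun h => ?_, fun ⟨h₁, h₂⟩ => h₁.trans h₂.symm⟩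
  have hCbot : C ≠ ⊥ := by
    rintro rfl
    simp at hk
  have hS : pairSupport C = Set.univ := by
    by_contra hS
    exact (dp_pred_lt_dp hCbot hS).ne h
  have hdp : dp C (Module.finrank F C) = n := by
    rw [dp_finrank, hS, Set.ncard_univ, Nat.card_eq_fintype_card, Fintype.card_fin]
  exact ⟨h.trans hdp, hdp⟩

theorem dp_pred_eq_dp_iff {F : Type*} [Field F] [Fintype F] {n k : ℕ} [NeZero n]
    (C : Submodule F (Fin n → F)) (hC : Module.finrank F C = k) (hk : 2 ≤ k) :
    dp C (k - 1) = dp C k ↔ (dp C (k - 1) = n ∧ dp C k = n) :=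
  dp_pred_eq_dp_iff_general C hC hk
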